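/- The free metabelian Lie algebra F_r is equationally Noetherian: for every n ∈ ℕ and every subset S ⊆ F_{r+n} there exists a finite subset S₀ ⊆ S such that V(S) = V(S₀). -/

import Mathlib

open LieAlgebra

universe u v w

/-- A Lie ring is metabelian if it satisfies the identity `⁅⁅x₁,x₂⁆,⁅x₃,x₄⁆⁆ = 0`. -/
def IsMetabelian (L : Type v) [LieRing L] : Prop :=
  ∀ a b c d : L, ⁅⁅a, b⁆, ⁅c, d⁆⁆ = 0

variable (k : Type u) [Field k]

namespace LieMeta

/-- The canonical projection onto the quotient by a Lie ideal, as a Lie algebra morphism. -/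
def mkHom {L : Type v} [LieRing L] [LieAlgebra k L] (I : LieIdeal k L) : L →ₗ⁅k⁆ L ⧸ I :=
  { I.toSubmodule.mkQ with
    map_lie' := fun {_ _} => rfl }

variable {k}

/-- Lift of a Lie algebra morphism through a quotient by an ideal inside its kernel. -/
def qlift {L : Type v} {B : Type w} [LieRing L] [LieAlgebra k L] [LieRing B] [LieAlgebra k B]
    (I : LieIdeal k L) (f : L →ₗ⁅k⁆ B) (h : I ≤ f.ker) : (L ⧸ I) →ₗ⁅k⁆ B :=
  { Submodule.liftQ I.toSubmodule (f : L →ₗ[k] B)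
      (fun x hx => by simpa using (LieHom.mem_ker).mp (h hx)) with
    map_lie' := by
      rintro ⟨x⟩ ⟨y⟩
      exact f.map_lie x y }

@[simp]
theorem qlift_mk {L : Type v} {B : Type w} [LieRing L] [LieAlgebra k L] [LieRing B]
    [LieAlgebra k B] (I : LieIdeal k L) (f : L →ₗ⁅k⁆ B) (h : I ≤ f.ker) (x : L) :
    qlift I f h (mkHom k I x) = f x := rfl

/-- In a metabelian Lie algebra the second derived ideal vanishes. -/
theorem derivedSeries_two_eq_bot_of_isMetabelian {B : Type w} [LieRing B] [LieAlgebra k B]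
    (hB : IsMetabelian B) : derivedSeries k B 2 = ⊥ := by
  have hD1 : ∀ x ∈ derivedSeries k B 1, ∀ m ∈ derivedSeries k B 1, ⁅x, m⁆ = (0 : B) := by
    have hspan : (↑(derivedSeries k B 1) : Submodule k B) =
        Submodule.span k {m | ∃ x ∈ (⊤ : LieIdeal k B), ∃ n ∈ (⊤ : LieIdeal k B), ⁅x, n⁆ = m} := by
      rw [show derivedSeries k B 1 = ⁅(⊤ : LieIdeal k B), (⊤ : LieIdeal k B)⁆ by
        rw [derivedSeries_def, derivedSeriesOfIdeal_succ, derivedSeriesOfIdeal_zero]]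
      exact LieSubmodule.lieIdeal_oper_eq_linear_span' ..
    intro x hx
    have hx' : x ∈ Submodule.span k
        {m | ∃ x ∈ (⊤ : LieIdeal k B), ∃ n ∈ (⊤ : LieIdeal k B), ⁅x, n⁆ = m} := by
      rw [← hspan]; exact hx
    clear hx
    induction hx' using Submodule.span_induction with
    | mem z hz =>
      obtain ⟨a, -, b, -, rfl⟩ := hz
      intro m hm
      have hm' : m ∈ Submodule.span k
          {m | ∃ x ∈ (⊤ : LieIdeal k B), ∃ n ∈ (⊤ : LieIdeal k B), ⁅x, n⁆ = m} := by
        rw [← hspan]; exact hm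
      clear hm
      induction hm' using Submodule.span_induction with
      | mem w hw => obtain ⟨c, -, d, -, rfl⟩ := hw; exact hB a b c d
      | zero => exact lie_zero _
      | add u v _ _ hu hv => rw [lie_add, hu, hv, add_zero]
      | smul t u _ hu => rw [lie_smul, hu, smul_zero]
    | zero => intro m _; exact zero_lie m
    | add u v _ _ hu hv =>
      intro m hm; rw [add_lie, hu m hm, hv m hm, add_zero]
    | smul t u _ hu => intro m hm; rw [smul_lie, hu m hm, smul_zero]
  rw [eq_bot_iff, show derivedSeries k B 2 = ⁅derivedSeries k B 1, derivedSeries k B 1⁆ by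
    rw [derivedSeries_def, derivedSeriesOfIdeal_succ]]
  rw [LieSubmodule.lie_le_iff]
  intro x hx m hm
  rw [LieSubmodule.mem_bot]
  exact hD1 x hx m hm

end LieMeta

/-- The free metabelian Lie algebra over `k` on a set `X` of generators: the quotient of the
free Lie algebra by its second derived ideal. -/
abbrev FreeMetabelian (X : Type v) : Type _ :=
  FreeLieAlgebra k X ⧸ derivedSeries k (FreeLieAlgebra k X) 2

namespace FreeMetabelian

/-- The canonical (free) generators of the free metabelian Lie algebra. -/
noncomputable def of (X : Type v) (x : X) : FreeMetabelian k X :=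
  LieMeta.mkHom k (derivedSeries k (FreeLieAlgebra k X) 2) (FreeLieAlgebra.of k x)

theorem isMetabelian (X : Type v) : IsMetabelian (FreeMetabelian k X) := by
  rintro ⟨a⟩ ⟨b⟩ ⟨c⟩ ⟨d⟩
  show LieMeta.mkHom k (derivedSeries k (FreeLieAlgebra k X) 2) ⁅⁅a, b⁆, ⁅c, d⁆⁆ = 0
  have h1 : ∀ x y : FreeLieAlgebra k X, ⁅x, y⁆ ∈ derivedSeries k (FreeLieAlgebra k X) 1 := by
    intro x y
    rw [show derivedSeries k (FreeLieAlgebra k X) 1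
        = ⁅(⊤ : LieIdeal k (FreeLieAlgebra k X)), (⊤ : LieIdeal k (FreeLieAlgebra k X))⁆ by
      rw [derivedSeries_def, derivedSeriesOfIdeal_succ, derivedSeriesOfIdeal_zero]]
    exact LieSubmodule.lie_mem_lie trivial trivial
  have h2 : ⁅⁅a, b⁆, ⁅c, d⁆⁆ ∈ derivedSeries k (FreeLieAlgebra k X) 2 := by
    rw [show derivedSeries k (FreeLieAlgebra k X) 2
        = ⁅derivedSeries k (FreeLieAlgebra k X) 1, derivedSeries k (FreeLieAlgebra k X) 1⁆ by
      rw [derivedSeries_def, derivedSeriesOfIdeal_succ]]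
    exact LieSubmodule.lie_mem_lie (h1 a b) (h1 c d)
  exact (LieSubmodule.Quotient.mk_eq_zero _).mpr h2

variable {k}

/-- The universal property: a map on generators into a metabelian Lie algebra extends
uniquely to the free metabelian Lie algebra. -/
noncomputable def lift {X : Type v} {B : Type w} [LieRing B] [LieAlgebra k B]
    (f : X → B) (hB : IsMetabelian B) : FreeMetabelian k X →ₗ⁅k⁆ B :=
  LieMeta.qlift _ (FreeLieAlgebra.lift k f) (by
    intro x hx
    rw [LieHom.mem_ker]
    have h1 : FreeLieAlgebra.lift k f x ∈
        LieIdeal.map (FreeLieAlgebra.lift k f) (derivedSeries k (FreeLieAlgebra k X) 2) :=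
      LieIdeal.mem_map hx
    have h2 := LieIdeal.derivedSeries_map_le (f := FreeLieAlgebra.lift k f) 2
    rw [LieMeta.derivedSeries_two_eq_bot_of_isMetabelian hB] at h2
    simpa using h2 h1)

@[simp]
theorem lift_of {X : Type v} {B : Type w} [LieRing B] [LieAlgebra k B]
    (f : X → B) (hB : IsMetabelian B) (x : X) : lift f hB (of k X x) = f x := by
  show FreeLieAlgebra.lift k f (FreeLieAlgebra.of k x) = f x
  simp

end FreeMetabelian

namespace LieAG

variable (r n : ℕ)

/-- The inclusion of `F_r` into `F_{r+n}` sending `aᵢ` to `aᵢ`. -/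
noncomputable def incl : FreeMetabelian k (Fin r) →ₗ⁅k⁆ FreeMetabelian k (Fin r ⊕ Fin n) :=
  FreeMetabelian.lift (fun i => FreeMetabelian.of k _ (Sum.inl i))
    (FreeMetabelian.isMetabelian k _)

/-- Evaluation at the point `p`: the unique Lie algebra morphism `F_{r+n} → F_r` which is the
identity on the generators of `F_r` and sends the unknown `xⱼ` to `p j`. -/
noncomputable def ev (p : Fin n → FreeMetabelian k (Fin r)) :
    FreeMetabelian k (Fin r ⊕ Fin n) →ₗ⁅k⁆ FreeMetabelian k (Fin r) :=
  FreeMetabelian.lift (Sum.elim (FreeMetabelian.of k _) p) (FreeMetabelian.isMetabelian k _)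

/-- The algebraic set defined by the system of equations `S ⊆ F_{r+n}`. -/
def vSet (S : Set (FreeMetabelian k (Fin r ⊕ Fin n))) :
    Set (Fin n → FreeMetabelian k (Fin r)) :=
  {p | ∀ f ∈ S, ev k r n p f = 0}

/-- A subset of affine `n`-space over `F_r` is algebraic if it is the solution set of some
system of equations. -/
def IsAlgSet (Y : Set (Fin n → FreeMetabelian k (Fin r))) : Prop :=
  ∃ S, Y = vSet k r n S

/-- The radical of a subset `Y` of affine `n`-space, as a Lie ideal of `F_{r+n}`:
all equations vanishing on every point of `Y`. -/
noncomputable def radIdeal (Y : Set (Fin n → FreeMetabelian k (Fin r))) :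
    LieIdeal k (FreeMetabelian k (Fin r ⊕ Fin n)) :=
  ⨅ (p : Fin n → FreeMetabelian k (Fin r)) (_ : p ∈ Y), (ev k r n p).ker

/-- The coordinate algebra `Γ(Y) = F_{r+n} / Rad(Y)`. -/
abbrev Coord (Y : Set (Fin n → FreeMetabelian k (Fin r))) : Type _ :=
  FreeMetabelian k (Fin r ⊕ Fin n) ⧸ radIdeal k r n Y

/-- The canonical morphism `κ_Y : F_r → Γ(Y)`. -/
noncomputable def kappa (Y : Set (Fin n → FreeMetabelian k (Fin r))) :
    FreeMetabelian k (Fin r) →ₗ⁅k⁆ Coord k r n Y :=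
  (LieMeta.mkHom k (radIdeal k r n Y)).comp (incl k r n)

theorem radIdeal_le_ker {Y : Set (Fin n → FreeMetabelian k (Fin r))}
    {p : Fin n → FreeMetabelian k (Fin r)} (hp : p ∈ Y) :
    radIdeal k r n Y ≤ (ev k r n p).ker := by
  exact iInf₂_le p hp

/-- The `F_r`-morphism `Γ(Y) → F_r` induced by evaluation at a point of `Y`. -/
noncomputable def pointHom {Y : Set (Fin n → FreeMetabelian k (Fin r))}
    {p : Fin n → FreeMetabelian k (Fin r)} (hp : p ∈ Y) :
    Coord k r n Y →ₗ⁅k⁆ FreeMetabelian k (Fin r) :=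
  LieMeta.qlift _ (ev k r n p) (radIdeal_le_ker k r n hp)

/-- The point of affine space associated with a morphism `Γ(Y) → F_r`: the images of
the unknowns. -/
noncomputable def pointOf {Y : Set (Fin n → FreeMetabelian k (Fin r))}
    (φ : Coord k r n Y →ₗ⁅k⁆ FreeMetabelian k (Fin r)) :
    Fin n → FreeMetabelian k (Fin r) :=
  fun j => φ (LieMeta.mkHom k (radIdeal k r n Y) (FreeMetabelian.of k _ (Sum.inr j)))

/-- The Zariski topology on affine `n`-space over `F_r`: the algebraic sets form a
subbasis of closed sets. -/
def zariski : TopologicalSpace (Fin n → FreeMetabelian k (Fin r)) :=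
  TopologicalSpace.generateFrom {U | ∃ S, U = (vSet k r n S)ᶜ}

/-- A closed subset (in the Zariski topology) is irreducible if it is nonempty and is not the
union of two proper closed subsets. -/
def IsIrredClosed (Y : Set (Fin n → FreeMetabelian k (Fin r))) : Prop :=
  Y.Nonempty ∧ ∀ Y₁ Y₂ : Set (Fin n → FreeMetabelian k (Fin r)),
    @IsClosed _ (zariski k r n) Y₁ → @IsClosed _ (zariski k r n) Y₂ →
      Y₁ ⊂ Y → Y₂ ⊂ Y → Y ≠ Y₁ ∪ Y₂

/-- `Y` and `Z` are isomorphic algebraic sets: there are mutually inverse morphisms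
(given coordinatewise by Lie polynomials) between them. -/
def AlgIso {n m : ℕ} (Y : Set (Fin n → FreeMetabelian k (Fin r)))
    (Z : Set (Fin m → FreeMetabelian k (Fin r))) : Prop :=
  ∃ (fs : Fin m → FreeMetabelian k (Fin r ⊕ Fin n))
    (gs : Fin n → FreeMetabelian k (Fin r ⊕ Fin m)),
    (∀ p ∈ Y, (fun j => ev k r n p (fs j)) ∈ Z) ∧
    (∀ q ∈ Z, (fun i => ev k r m q (gs i)) ∈ Y) ∧
    (∀ p ∈ Y, (fun i => ev k r m (fun j => ev k r n p (fs j)) (gs i)) = p) ∧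
    (∀ q ∈ Z, (fun j => ev k r n (fun i => ev k r m q (gs i)) (fs j)) = q)

end LieAG

/-- The Fitting radical of a Lie algebra: the set of elements whose generated Lie ideal is
nilpotent. -/
def fittingSet (B : Type w) [LieRing B] [LieAlgebra k B] : Set B :=
  {x | LieModule.IsNilpotent (LieSubmodule.lieSpan k B ({x} : Set B))
    (LieSubmodule.lieSpan k B ({x} : Set B))}

/-!
Split `F_r = V ⊕ D`, where `V` is spanned by the generators and `D = ⁅F_r, F_r⁆` is abelian, so
that `D` is a module over the commutative algebra generated by the operators `ad aᵢ`. Every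
equation `f ∈ F_{r+n}` is then represented by a vector `v f` with entries in the polynomial ring
`R = k[λⱼᵢ, tᵢ]`: its value at any point `p` is read off from `v f` by specialising `λⱼᵢ` to the
coefficient of `aᵢ` in `pⱼ` and `tᵢ` to `ad aᵢ`. The vectors vanishing at `p` form an
`R`-submodule of the Noetherian module `R^N`, so the span of `v '' S` is already spanned by
`v '' S₀` for a finite `S₀ ⊆ S`, and then `V(S₀) = V(S)`.
-/

theorem Submodule.exists_finite_subset_span_image_eq {R M α : Type*} [Semiring R]
    [AddCommMonoid M] [Module R M] [IsNoetherian R M] (v : α → M) (S : Set α) :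
    ∃ S₀ ⊆ S, S₀.Finite ∧ span R (v '' S₀) = span R (v '' S) := by
  obtain ⟨t, htS, ht⟩ :=
    (fg_span_iff_fg_span_finset_subset _).1 (IsNoetherian.noetherian (span R (v '' S)))
  exact Set.exists_subset_image_finite_and (p := fun t => span R t = span R (v '' S)) |>.1
    ⟨t, htS, t.finite_toSet, ht.symm⟩

namespace LieAlgebra

variable {k} {L : Type v} [LieRing L] [LieAlgebra k L]

theorem lie_mem_derivedSeries_one (x y : L) : ⁅x, y⁆ ∈ derivedSeries k L 1 := by
  rw [derivedSeries_def, derivedSeriesOfIdeal_succ, derivedSeriesOfIdeal_zero]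
  exact LieSubmodule.lie_mem_lie trivial trivial

theorem derivedSeries_one_le_of_lie_mem {I : LieIdeal k L} (h : ∀ x y : L, ⁅x, y⁆ ∈ I) :
    derivedSeries k L 1 ≤ I := by
  rw [derivedSeries_def, derivedSeriesOfIdeal_succ, derivedSeriesOfIdeal_zero]
  exact (LieSubmodule.lie_le_iff _ _ _).2 fun x _ y _ => h x y

end LieAlgebra

section Metabelian

variable {k} {L : Type v} [LieRing L] [LieAlgebra k L]

theorem IsMetabelian.lie_eq_zero_of_mem_derivedSeries_one (hL : IsMetabelian L) {x y : L}
    (hx : x ∈ derivedSeries k L 1) (hy : y ∈ derivedSeries k L 1) : ⁅x, y⁆ = 0 := by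
  have h : ⁅x, y⁆ ∈ derivedSeries k L 2 := by
    rw [derivedSeries_def, derivedSeriesOfIdeal_succ]
    exact LieSubmodule.lie_mem_lie hx hy
  rwa [LieMeta.derivedSeries_two_eq_bot_of_isMetabelian hL, LieSubmodule.mem_bot] at h

theorem IsMetabelian.lieSubalgebra (hL : IsMetabelian L) (S : LieSubalgebra k L) :
    IsMetabelian S :=
  fun a b c d => Subtype.ext (hL a b c d)

end Metabelian

namespace FreeMetabelian

variable {k} {X : Type v}

theorem hom_ext {B : Type w} [LieRing B] [LieAlgebra k B] {g₁ g₂ : FreeMetabelian k X →ₗ⁅k⁆ B}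
    (h : ∀ x, g₁ (of k X x) = g₂ (of k X x)) : g₁ = g₂ := by
  have h' : g₁.comp (LieMeta.mkHom k _) = g₂.comp (LieMeta.mkHom k _) :=
    FreeLieAlgebra.hom_ext h
  ext ⟨y⟩
  exact DFunLike.congr_fun h' y

theorem lieSpan_range_of :
    LieSubalgebra.lieSpan k (FreeMetabelian k X) (Set.range (of k X)) = ⊤ := by
  set S := LieSubalgebra.lieSpan k (FreeMetabelian k X) (Set.range (of k X))
  let g : FreeMetabelian k X →ₗ⁅k⁆ S :=
    lift (fun x => ⟨of k X x, LieSubalgebra.subset_lieSpan (Set.mem_range_self x)⟩)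
      ((isMetabelian k X).lieSubalgebra S)
  have hg : S.incl.comp g = LieHom.id (R := k) := hom_ext fun x => by simp [g]
  refine eq_top_iff.2 fun x _ => ?_
  have hx : S.incl (g x) = x := DFunLike.congr_fun hg x
  exact hx ▸ (g x).2

@[elab_as_elim]
theorem induction_on {motive : FreeMetabelian k X → Prop} (x : FreeMetabelian k X)
    (of : ∀ i, motive (FreeMetabelian.of k X i)) (zero : motive 0)
    (add : ∀ x y, motive x → motive y → motive (x + y))
    (smul : ∀ (c : k) x, motive x → motive (c • x))
    (lie : ∀ x y, motive x → motive y → motive ⁅x, y⁆) : motive x := by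
  have hx : x ∈ LieSubalgebra.lieSpan k _ (Set.range (FreeMetabelian.of k X)) :=
    lieSpan_range_of (k := k) (X := X) ▸ trivial
  induction hx using LieSubalgebra.lieSpan_induction with
  | mem _ h => obtain ⟨i, rfl⟩ := h; exact of i
  | zero => exact zero
  | add _ _ _ _ hx hy => exact add _ _ hx hy
  | smul c _ _ hx => exact smul c _ hx
  | lie _ _ _ _ hx hy => exact lie _ _ hx hy

section Coefficients

attribute [local instance] LieRing.ofAssociativeRing

variable [DecidableEq X]

noncomputable def coeff : FreeMetabelian k X →ₗ⁅k⁆ (X → k) :=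
  lift (fun x => Pi.single x 1) fun _ _ _ _ => by rw [Ring.lie_def, mul_comm, sub_self]

@[simp]
theorem coeff_of (x : X) : coeff (of k X x) = Pi.single x 1 :=
  lift_of _ _ x

theorem coeff_eq_zero_of_mem_derivedSeries {y : FreeMetabelian k X}
    (hy : y ∈ derivedSeries k _ 1) :
    coeff y = 0 :=
  derivedSeries_one_le_of_lie_mem (I := coeff.ker)
    (fun a b => by rw [LieHom.mem_ker, LieHom.map_lie, Ring.lie_def, mul_comm, sub_self]) hy

variable [Fintype X]

theorem coeff_sum_smul_of (c : X → k) : coeff (∑ i, c i • of k X i) = c := by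
  ext j
  simp [Pi.single_apply]

theorem sub_sum_coeff_smul_of_mem (x : FreeMetabelian k X) :
    x - ∑ i, coeff x i • of k X i ∈ derivedSeries k _ 1 := by
  induction x using induction_on with
  | of i => simp [Pi.single_apply]
  | zero => simp
  | add x y hx hy =>
    convert add_mem hx hy using 1
    simp only [map_add, Pi.add_apply, add_smul, Finset.sum_add_distrib]
    abel
  | smul c x hx =>
    convert SMulMemClass.smul_mem c hx using 1
    simp [smul_sub, Finset.smul_sum, smul_smul]
  | lie x y _ _ =>
    simpa [coeff_eq_zero_of_mem_derivedSeries (lie_mem_derivedSeries_one x y)] using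
      lie_mem_derivedSeries_one (k := k) x y

end Coefficients

end FreeMetabelian

namespace LieAG

open FreeMetabelian
open MvPolynomial (X aeval algHom_ext)

variable {k} {r n : ℕ}

variable (k r) in
abbrev Derived : Type u := derivedSeries k (FreeMetabelian k (Fin r)) 1

noncomputable def adOf (i : Fin r) : Module.End k (Derived k r) :=
  LieModule.toEnd k (FreeMetabelian k (Fin r)) (Derived k r) (of k (Fin r) i)

theorem coe_adOf_apply (i : Fin r) (d : Derived k r) :
    (adOf i d : FreeMetabelian k (Fin r)) = ⁅of k (Fin r) i, (d : FreeMetabelian k (Fin r))⁆ :=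
  rfl

theorem commute_adOf (i j : Fin r) : Commute (adOf (k := k) i) (adOf j) := by
  refine LinearMap.ext fun d => Subtype.ext ?_
  have h : ⁅⁅of k (Fin r) i, of k (Fin r) j⁆, (d : FreeMetabelian k (Fin r))⁆ = 0 :=
    (isMetabelian k _).lie_eq_zero_of_mem_derivedSeries_one (lie_mem_derivedSeries_one _ _) d.2
  rw [lie_lie, sub_eq_zero] at h
  simpa [coe_adOf_apply] using h

variable (k r) in
noncomputable def adAlgebra : Subalgebra k (Module.End k (Derived k r)) :=
  Algebra.adjoin k (Set.range adOf)

instance : IsMulCommutative (adAlgebra k r) :=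
  Algebra.isMulCommutative_adjoin k <| by
    rintro _ ⟨i, rfl⟩ _ ⟨j, rfl⟩
    exact commute_adOf i j

open scoped IsMulCommutative

/-- `inl (j, i)` stands for the coefficient of `aᵢ` in the `j`-th coordinate of a point,
`inr i` for the action of `ad aᵢ` on the derived algebra. -/
abbrev Var (r n : ℕ) : Type := (Fin n × Fin r) ⊕ Fin r

/-- A formal element has a coefficient for each generator `aᵢ`, each bracket `⁅aᵢ, aᵢ'⁆` and
the derived component of each coordinate of a point. -/
abbrev Formal (k : Type u) [Field k] (r n : ℕ) : Type u :=
  Fin r ⊕ ((Fin r × Fin r) ⊕ Fin n) → MvPolynomial (Var r n) k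

noncomputable def scalarEval (p : Fin n → FreeMetabelian k (Fin r)) :
    MvPolynomial (Var r n) k →ₐ[k] k :=
  aeval (Sum.elim (fun ji => coeff (p ji.1) ji.2) 0)

noncomputable def opEval (p : Fin n → FreeMetabelian k (Fin r)) :
    MvPolynomial (Var r n) k →ₐ[k] Module.End k (Derived k r) :=
  (adAlgebra k r).val.comp <| aeval <| Sum.elim
    (fun ji => algebraMap k (adAlgebra k r) (coeff (p ji.1) ji.2))
    (fun i => ⟨adOf i, Algebra.subset_adjoin ⟨i, rfl⟩⟩)

noncomputable def dropAd : MvPolynomial (Var r n) k →ₐ[k] MvPolynomial (Var r n) k :=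
  aeval (Sum.elim (X ∘ Sum.inl) 0)

variable (p : Fin n → FreeMetabelian k (Fin r))

@[simp]
theorem scalarEval_X_inr (i : Fin r) :
    scalarEval p (X (Sum.inr i) : MvPolynomial (Var r n) k) = 0 := by
  simp [scalarEval]

@[simp]
theorem opEval_X_inr (i : Fin r) :
    opEval p (X (Sum.inr i) : MvPolynomial (Var r n) k) = adOf i := by
  simp [opEval]

theorem opEval_dropAd (q : MvPolynomial (Var r n) k) :
    opEval p (dropAd q) = algebraMap k _ (scalarEval p q) := by
  suffices h : (opEval p).comp dropAd = (Algebra.ofId k _).comp (scalarEval p) from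
    DFunLike.congr_fun h q
  refine algHom_ext fun s => ?_
  cases s <;> simp [opEval, dropAd, scalarEval, Algebra.ofId_apply]

noncomputable def derivedGen : (Fin r × Fin r) ⊕ Fin n → Derived k r :=
  Sum.elim (fun ii => ⟨⁅of k (Fin r) ii.1, of k (Fin r) ii.2⁆, lie_mem_derivedSeries_one _ _⟩)
    (fun j => ⟨p j - ∑ i, coeff (p j) i • of k (Fin r) i, sub_sum_coeff_smul_of_mem _⟩)

noncomputable def linearEval : Formal k r n →ₗ[k] FreeMetabelian k (Fin r) where
  toFun v := ∑ i, scalarEval p (v (.inl i)) • of k (Fin r) i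
  map_add' v w := by simp [add_smul, Finset.sum_add_distrib]
  map_smul' c v := by simp [Finset.smul_sum, smul_smul]

noncomputable def derivedEval : Formal k r n →ₗ[k] Derived k r where
  toFun v := ∑ c, opEval p (v (.inr c)) (derivedGen p c)
  map_add' v w := by simp [Finset.sum_add_distrib]
  map_smul' c v := by simp [Finset.smul_sum]

noncomputable def eval (v : Formal k r n) : FreeMetabelian k (Fin r) :=
  linearEval p v + derivedEval p v

theorem linearEval_smul (g : MvPolynomial (Var r n) k) (v : Formal k r n) :
    linearEval p (g • v) = scalarEval p g • linearEval p v := by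
  simp [linearEval, Finset.smul_sum, smul_smul]

theorem derivedEval_smul (g : MvPolynomial (Var r n) k) (v : Formal k r n) :
    derivedEval p (g • v) = opEval p g (derivedEval p v) := by
  simp [derivedEval, map_sum]

theorem eval_add (v w : Formal k r n) : eval p (v + w) = eval p v + eval p w := by
  simp only [eval, map_add, LieSubmodule.coe_add]
  abel

theorem eval_smul (c : k) (v : Formal k r n) : eval p (c • v) = c • eval p v := by
  simp [eval, smul_add]

noncomputable def vanishing : Submodule (MvPolynomial (Var r n) k) (Formal k r n) where
  carrier := {v | linearEval p v = 0 ∧ derivedEval p v = 0}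
  add_mem' hv hw := ⟨by rw [map_add, hv.1, hw.1, add_zero], by rw [map_add, hv.2, hw.2, add_zero]⟩
  zero_mem' := ⟨map_zero _, map_zero _⟩
  smul_mem' g v hv := ⟨by rw [linearEval_smul, hv.1, smul_zero],
    by rw [derivedEval_smul, hv.2, map_zero]⟩

theorem eval_eq_zero_iff (v : Formal k r n) : eval p v = 0 ↔ v ∈ vanishing p := by
  refine ⟨fun h => ?_, fun h => by simp [eval, h.1, h.2]⟩
  have hcoeff : coeff (linearEval p v) = coeff (eval p v) := by
    rw [eval, map_add, coeff_eq_zero_of_mem_derivedSeries (derivedEval p v).2, add_zero]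
  have hlin : linearEval p v = 0 := by
    have hc : (fun i => scalarEval p (v (.inl i))) = 0 := by
      rw [← coeff_sum_smul_of (fun i => scalarEval p (v (.inl i)))]
      exact hcoeff.trans (by rw [h, map_zero])
    change ∑ i, scalarEval p (v (.inl i)) • of k (Fin r) i = 0
    simp [funext_iff.1 hc]
  refine ⟨hlin, Subtype.ext ?_⟩
  simpa [eval, hlin] using h

noncomputable def formalOf : Fin r ⊕ Fin n → Formal k r n
  | .inl i => Pi.single (.inl i) 1
  | .inr j => Sum.elim (fun i => X (.inl (j, i))) (Pi.single (.inr j) 1)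

theorem eval_formalOf (a : Fin r ⊕ Fin n) :
    eval p (formalOf a) = Sum.elim (of k (Fin r)) p a := by
  rcases a with i | j
  · simp [eval, formalOf, linearEval, derivedEval, Pi.single_apply]
  · simp [eval, formalOf, linearEval, derivedEval, derivedGen, scalarEval, Fintype.sum_sum_type,
      Pi.single_apply, DFunLike.ite_apply]

theorem ev_of (a : Fin r ⊕ Fin n) :
    ev k r n p (of k (Fin r ⊕ Fin n) a) = Sum.elim (of k (Fin r)) p a :=
  lift_of _ _ a

noncomputable def adPoly (v : Formal k r n) : MvPolynomial (Var r n) k :=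
  ∑ i, dropAd (v (.inl i)) * X (.inr i)

noncomputable def crossTerm (v w : Formal k r n) : Formal k r n :=
  Sum.elim 0 (Sum.elim (fun ii => dropAd (v (.inl ii.1)) * dropAd (w (.inl ii.2))) 0)

/-- Modelled on `⁅l + d, l' + d'⁆ = ⁅l, l'⁆ + ⁅l, d'⁆ - ⁅l', d⁆` for `l, l' ∈ V` and `d, d' ∈ D`. -/
noncomputable def formalLie (v w : Formal k r n) : Formal k r n :=
  crossTerm v w + adPoly v • w - adPoly w • v

theorem scalarEval_adPoly (v : Formal k r n) : scalarEval p (adPoly v) = 0 := by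
  simp [adPoly]

theorem coe_opEval_adPoly_apply (v : Formal k r n) (d : Derived k r) :
    (opEval p (adPoly v) d : FreeMetabelian k (Fin r)) =
      ⁅linearEval p v, (d : FreeMetabelian k (Fin r))⁆ := by
  simp [adPoly, opEval_dropAd, linearEval, sum_lie, smul_lie, coe_adOf_apply,
    Algebra.algebraMap_eq_smul_one]

theorem linearEval_crossTerm (v w : Formal k r n) : linearEval p (crossTerm v w) = 0 := by
  simp [linearEval, crossTerm]

theorem coe_derivedEval_crossTerm (v w : Formal k r n) :
    (derivedEval p (crossTerm v w) : FreeMetabelian k (Fin r)) =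
      ⁅linearEval p v, linearEval p w⁆ := by
  simp [derivedEval, crossTerm, derivedGen, Fintype.sum_sum_type, Fintype.sum_prod_type,
    opEval_dropAd, linearEval, sum_lie_sum, smul_lie, lie_smul, smul_smul,
    Algebra.algebraMap_eq_smul_one, mul_comm]

theorem eval_formalLie (v w : Formal k r n) :
    eval p (formalLie v w) = ⁅eval p v, eval p w⁆ := by
  have hlin : linearEval p (formalLie v w) = 0 := by
    simp [formalLie, linearEval_smul, linearEval_crossTerm, scalarEval_adPoly]
  have hder : ⁅(derivedEval p v : FreeMetabelian k (Fin r)),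
      (derivedEval p w : FreeMetabelian k (Fin r))⁆ = 0 :=
    (isMetabelian k _).lie_eq_zero_of_mem_derivedSeries_one (derivedEval p v).2 (derivedEval p w).2
  rw [eval, hlin, zero_add, formalLie, map_sub, map_add, derivedEval_smul, derivedEval_smul]
  push_cast
  rw [coe_derivedEval_crossTerm, coe_opEval_adPoly_apply, coe_opEval_adPoly_apply, eval, eval]
  simp only [lie_add, add_lie, hder, add_zero]
  rw [← lie_skew (derivedEval p v : FreeMetabelian k (Fin r))]
  abel

theorem exists_formal_ev_eq_eval (f : FreeMetabelian k (Fin r ⊕ Fin n)) :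
    ∃ v : Formal k r n, ∀ p, ev k r n p f = eval p v := by
  induction f using FreeMetabelian.induction_on with
  | of a => exact ⟨formalOf a, fun p => by rw [ev_of, eval_formalOf]⟩
  | zero => exact ⟨0, fun p => by simp [eval]⟩
  | add f g hf hg =>
    obtain ⟨v, hv⟩ := hf
    obtain ⟨w, hw⟩ := hg
    exact ⟨v + w, fun p => by rw [map_add, hv, hw, eval_add]⟩
  | smul c f hf =>
    obtain ⟨v, hv⟩ := hf
    exact ⟨c • v, fun p => by rw [map_smul, hv, eval_smul]⟩
  | lie f g hf hg =>
    obtain ⟨v, hv⟩ := hf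
    obtain ⟨w, hw⟩ := hg
    exact ⟨formalLie v w, fun p => by rw [LieHom.map_lie, hv, hw, eval_formalLie]⟩

end LieAG

theorem freeMetabelian_equationallyNoetherian_general
    (k : Type u) [Field k] (r : ℕ) (n : ℕ)
    (S : Set (FreeMetabelian k (Fin r ⊕ Fin n))) :
    ∃ S₀ ⊆ S, S₀.Finite ∧ LieAG.vSet k r n S = LieAG.vSet k r n S₀ := by
  choose v hv using LieAG.exists_formal_ev_eq_eval (k := k) (r := r) (n := n)
  obtain ⟨S₀, hS₀S, hS₀, hspan⟩ := Submodule.exists_finite_subset_span_image_eq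
    (R := MvPolynomial (LieAG.Var r n) k) v S
  refine ⟨S₀, hS₀S, hS₀, subset_antisymm (fun p hp f hf => hp f (hS₀S hf)) fun p hp f hf => ?_⟩
  have hle : Submodule.span _ (v '' S) ≤ LieAG.vanishing p := by
    rw [← hspan, Submodule.span_le]
    rintro _ ⟨g, hg, rfl⟩
    exact (LieAG.eval_eq_zero_iff p _).1 (hv g p ▸ hp g hg)
  rw [hv f p, LieAG.eval_eq_zero_iff]
  exact hle (Submodule.subset_span ⟨f, hf, rfl⟩)

/-- The free metabelian Lie algebra `F_r` (of rank `r ≥ 2` over a field `k`)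
is equationally Noetherian: for every `n` and every system of equations
`S ⊆ F_{r+n}` there is a finite subsystem `S₀ ⊆ S` with `V(S) = V(S₀)`. -/
theorem freeMetabelian_equationallyNoetherian
    (k : Type u) [Field k] (r : ℕ) (hr : 2 ≤ r) (n : ℕ)
    (S : Set (FreeMetabelian k (Fin r ⊕ Fin n))) :
    ∃ S₀ ⊆ S, S₀.Finite ∧ LieAG.vSet k r n S = LieAG.vSet k r n S₀ :=
  freeMetabelian_equationallyNoetherian_general k r n S
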